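/- (Zero Exclusion Principle for q-instability.) Let S be a monic interval polynomial of degree n such that no polynomial in S has a root on the imaginary axis (i.e., for every P ∈ S and every real ω, P(iω) ≠ 0). If some polynomial P₀ ∈ S has exactly q roots (counted with multiplicity) with positive real part and n − q roots with negative real part, then every polynomial P ∈ S has exactly q roots with positive real part and n − q roots with negative real part. -/

import Mathlib

open Polynomial

/-- Membership of a polynomial `P` in the monic interval polynomial of degree `n`
with coefficient intervals `[a k, b k]` (intervals prescribed for `k < n`). -/
def memIntervalPoly (n : ℕ) (a b : ℕ → ℝ) (P : Polynomial ℝ) : Prop :=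
  P.Monic ∧ P.natDegree = n ∧ ∀ k < n, P.coeff k ∈ Set.Icc (a k) (b k)

open scoped Classical in
/-- Number of complex roots (with multiplicity) of `P` with positive real part. -/
noncomputable def posRootCount (P : Polynomial ℝ) : ℕ :=
  Multiset.card ((P.map (algebraMap ℝ ℂ)).roots.filter fun z => 0 < z.re)

open scoped Classical in
/-- Number of complex roots (with multiplicity) of `P` with negative real part. -/
noncomputable def negRootCount (P : Polynomial ℝ) : ℕ :=
  Multiset.card ((P.map (algebraMap ℝ ℂ)).roots.filter fun z => z.re < 0)

/-!
The members of `S` form a convex set, so `P₀` and `P` are joined by the segment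
`t ↦ (1 - t) • P₀ + t • P` inside `S`. The roots of a monic polynomial of fixed degree move
continuously with its coefficients: Cauchy's bound keeps them in a compact set, and any limit of
root tuples is a root tuple of the limit polynomial. So the number of roots in the open right
half-plane can only change when a root crosses the imaginary axis, which never happens in `S`;
it is therefore locally constant on `[0, 1]`, hence constant. With no roots on the axis, the roots
in the open left half-plane are all the others.
-/

open Filter Topology

namespace Polynomial

theorem exists_eq_prod_X_sub_C_of_monic {K : Type*} [Field K] [IsAlgClosed K] {p : K[X]}
    (hp : p.Monic) {n : ℕ} (hn : p.natDegree = n) : ∃ w : Fin n → K, p = ∏ i, (X - C (w i)) := by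
  obtain ⟨l, hl⟩ : ∃ l : List K, p.roots = l := ⟨p.roots.toList, (Multiset.coe_toList _).symm⟩
  obtain rfl : l.length = n := by
    rw [← hn, ← IsAlgClosed.card_roots_eq_natDegree, hl, Multiset.coe_card]
  refine ⟨l.get, ?_⟩
  have hprod : ∏ i, (X - C (l.get i)) = ((l : Multiset K).map fun a => X - C a).prod := by
    rw [Finset.prod_eq_multiset_prod]
    conv_rhs => rw [← List.ofFn_get l, ← Fin.univ_val_map, Multiset.map_map]
    rfl
  rw [hprod, ← hl]
  exact (IsAlgClosed.splits p).eq_prod_roots_of_monic hp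

theorem roots_prod_X_sub_C_fintype {R ι : Type*} [CommRing R] [IsDomain R] [Fintype ι] (w : ι → R) :
    (∏ i, (X - C (w i))).roots = Finset.univ.val.map w := by
  rw [← roots_multiset_prod_X_sub_C (Finset.univ.val.map w), Multiset.map_map]
  rfl

theorem norm_le_of_mem_roots_of_monic {K : Type*} [NormedField K] {p : K[X]} (hp : p.Monic) {z : K}
    (hz : z ∈ p.roots) : ‖z‖ ≤ 1 + ∑ j ∈ Finset.range p.natDegree, ‖p.coeff j‖ := by
  have hsup : (Finset.range p.natDegree).sup (‖p.coeff ·‖₊) ≤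
      ∑ j ∈ Finset.range p.natDegree, ‖p.coeff j‖₊ :=
    Finset.sup_le fun j hj => Finset.single_le_sum (f := (‖p.coeff ·‖₊)) (fun _ _ => zero_le) hj
  have hbound := (mem_roots'.mp hz).2.norm_lt_cauchyBound (mem_roots'.mp hz).1
  rw [cauchyBound, hp.leadingCoeff, nnnorm_one, div_one] at hbound
  have : ‖z‖₊ ≤ 1 + ∑ j ∈ Finset.range p.natDegree, ‖p.coeff j‖₊ := by
    rw [add_comm]; exact hbound.le.trans (by gcongr)
  simpa using NNReal.coe_le_coe.2 this

theorem tendsto_eval_of_tendsto_coeff {R α : Type*} [Semiring R] [TopologicalSpace R]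
    [IsTopologicalSemiring R] {l : Filter α} {p : α → R[X]} {p₀ : R[X]} {N : ℕ}
    (hd : ∀ a, (p a).natDegree ≤ N) (hd₀ : p₀.natDegree ≤ N)
    (hc : ∀ j, Tendsto (fun a => (p a).coeff j) l (𝓝 (p₀.coeff j))) (x : R) :
    Tendsto (fun a => (p a).eval x) l (𝓝 (p₀.eval x)) := by
  simp only [eval_eq_sum_range' (Nat.lt_succ_of_le (hd _)),
    eval_eq_sum_range' (Nat.lt_succ_of_le hd₀)]
  exact tendsto_finsetSum _ fun j _ => (hc j).mul_const _

theorem eq_prod_X_sub_C_of_tendsto {K α ι : Type*} [Field K] [Infinite K] [TopologicalSpace K]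
    [IsTopologicalRing K] [T2Space K] [Fintype ι] {l : Filter α} [l.NeBot] {z : α → ι → K}
    {w : ι → K} (hz : Tendsto z l (𝓝 w)) {p₀ : K[X]}
    (hp : ∀ x, Tendsto (fun a => (∏ i, (X - C (z a i))).eval x) l (𝓝 (p₀.eval x))) :
    p₀ = ∏ i, (X - C (w i)) := by
  refine funext fun x => tendsto_nhds_unique (hp x) ?_
  simp only [eval_prod, eval_sub, eval_X, eval_C]
  exact tendsto_finsetProd _ fun i _ => tendsto_const_nhds.sub (tendsto_pi_nhds.1 hz i)

end Polynomial

section HalfPlane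

open Complex Finset

noncomputable def rightHalfPlaneRootCount (p : ℂ[X]) : ℕ :=
  Multiset.card (p.roots.filter fun z => 0 < z.re)

theorem rightHalfPlaneRootCount_prod {ι : Type*} [Fintype ι] (w : ι → ℂ) :
    rightHalfPlaneRootCount (∏ i, (X - C (w i))) = #{i | 0 < (w i).re} := by
  rw [rightHalfPlaneRootCount, roots_prod_X_sub_C_fintype, Multiset.filter_map, Multiset.card_map]
  rfl

theorem re_ne_zero_of_mem_roots {p : ℂ[X]} (himag : ∀ ω : ℝ, p.eval (ω * I) ≠ 0) {z : ℂ}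
    (hz : z ∈ p.roots) : z.re ≠ 0 := by
  intro hre
  apply himag z.im
  rw [← (mem_roots'.mp hz).2]
  congr
  apply Complex.ext <;> simp [hre]

theorem eventually_card_re_pos_eq {ι : Type*} [Fintype ι] {w : ι → ℂ} (hw : ∀ i, (w i).re ≠ 0) :
    ∀ᶠ v in 𝓝 w, #{i | 0 < (v i).re} = #{i | 0 < (w i).re} := by
  have hsign : ∀ᶠ v in 𝓝 w, ∀ i, (0 < (v i).re ↔ 0 < (w i).re) := by
    refine eventually_all.2 fun i => ?_
    have hre : Tendsto (fun v : ι → ℂ => (v i).re) (𝓝 w) (𝓝 (w i).re) :=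
      (continuous_re.comp (continuous_apply i)).tendsto w
    rcases (hw i).lt_or_gt with hneg | hpos
    · filter_upwards [hre.eventually (eventually_lt_nhds hneg)] with v hv
      exact iff_of_false hv.not_gt hneg.not_gt
    · filter_upwards [hre.eventually (eventually_gt_nhds hpos)] with v hv
      exact iff_of_true hv hpos
  filter_upwards [hsign] with v hv
  simp only [hv]

theorem exists_forall_norm_le_of_tendsto_coeff {K : Type*} [NormedField K] {p : ℕ → K[X]}
    {c : ℕ → K} {n : ℕ} (hm : ∀ k, (p k).Monic) (hd : ∀ k, (p k).natDegree = n)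
    (hc : ∀ j, Tendsto (fun k => (p k).coeff j) atTop (𝓝 (c j))) :
    ∃ R, ∀ k, ∀ z ∈ (p k).roots, ‖z‖ ≤ R := by
  obtain ⟨R, hR⟩ := (tendsto_const_nhds (x := (1 : ℝ)).add
    (tendsto_finsetSum (Finset.range n) fun j _ => (hc j).norm)).bddAbove_range
  exact ⟨R, fun k z hz => (norm_le_of_mem_roots_of_monic (hm k) hz).trans (hd k ▸ hR ⟨k, rfl⟩)⟩

theorem tendsto_rightHalfPlaneRootCount {α : Type*} {l : Filter α} [l.IsCountablyGenerated]
    {p : α → ℂ[X]} {p₀ : ℂ[X]} {n : ℕ} (hm : ∀ a, (p a).Monic) (hd : ∀ a, (p a).natDegree = n)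
    (hd₀ : p₀.natDegree ≤ n) (hc : ∀ j, Tendsto (fun a => (p a).coeff j) l (𝓝 (p₀.coeff j)))
    (himag : ∀ ω : ℝ, p₀.eval (ω * I) ≠ 0) :
    Tendsto (fun a => rightHalfPlaneRootCount (p a)) l (𝓝 (rightHalfPlaneRootCount p₀)) := by
  refine tendsto_of_subseq_tendsto fun ns hns => ?_
  choose z hz using fun k => exists_eq_prod_X_sub_C_of_monic (hm (ns k)) (hd (ns k))
  obtain ⟨R, hR⟩ := exists_forall_norm_le_of_tendsto_coeff (fun k => hm (ns k)) (fun k => hd (ns k))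
    fun j => (hc j).comp hns
  have hzR : ∀ k, z k ∈ Set.univ.pi fun _ => Metric.closedBall 0 R := fun k i _ =>
    mem_closedBall_zero_iff.2 <| hR k _ <| by
      rw [hz, roots_prod_X_sub_C_fintype]; exact Multiset.mem_map_of_mem _ (Finset.mem_univ i)
  obtain ⟨w, -, ms, hms, hzw⟩ :=
    tendsto_subseq_of_bounded (.pi fun _ => Metric.isBounded_closedBall) hzR
  have hp₀ : p₀ = ∏ i, (X - C (w i)) := eq_prod_X_sub_C_of_tendsto hzw fun x => by
    simpa only [Function.comp_def, hz] using
      (tendsto_eval_of_tendsto_coeff (fun a => (hd a).le) hd₀ hc x).comp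
        (hns.comp hms.tendsto_atTop)
  have hw : ∀ i, (w i).re ≠ 0 := fun i => re_ne_zero_of_mem_roots himag <| by
    rw [hp₀, roots_prod_X_sub_C_fintype]; exact Multiset.mem_map_of_mem _ (Finset.mem_univ i)
  refine ⟨ms, ?_⟩
  simp only [hz, hp₀, rightHalfPlaneRootCount_prod]
  exact tendsto_nhds_of_eventually_eq (hzw.eventually (eventually_card_re_pos_eq hw))

theorem continuous_rightHalfPlaneRootCount {T : Type*} [TopologicalSpace T]
    [FirstCountableTopology T] {p : T → ℂ[X]} {n : ℕ} (hm : ∀ t, (p t).Monic)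
    (hd : ∀ t, (p t).natDegree = n) (hc : ∀ j, Continuous fun t => (p t).coeff j)
    (himag : ∀ t, ∀ ω : ℝ, (p t).eval (ω * I) ≠ 0) :
    Continuous fun t => rightHalfPlaneRootCount (p t) :=
  continuous_iff_continuousAt.2 fun t =>
    tendsto_rightHalfPlaneRootCount hm hd (hd t).le (fun j => (hc j).continuousAt) (himag t)

theorem posRootCount_add_negRootCount {P : ℝ[X]}
    (himag : ∀ ω : ℝ, (P.map (algebraMap ℝ ℂ)).eval (ω * I) ≠ 0) :
    posRootCount P + negRootCount P = P.natDegree := by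
  have hneg : (P.map (algebraMap ℝ ℂ)).roots.filter (fun z => z.re < 0) =
      (P.map (algebraMap ℝ ℂ)).roots.filter (fun z => ¬ 0 < z.re) :=
    Multiset.filter_congr fun z hz =>
      ⟨fun h => h.not_gt, fun h => (not_lt.1 h).lt_of_ne (re_ne_zero_of_mem_roots himag hz)⟩
  rw [posRootCount, negRootCount, hneg, ← Multiset.card_add, Multiset.filter_add_not,
    IsAlgClosed.card_roots_map_eq_natDegree_from_simpleRing]

end HalfPlane

theorem convex_setOf_memIntervalPoly (n : ℕ) (a b : ℕ → ℝ) :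
    Convex ℝ {P | memIntervalPoly n a b P} := by
  rintro P ⟨hPm, hPd, hPc⟩ Q ⟨hQm, hQd, hQc⟩ s t hs ht hst
  have hcoeff : ∀ k, (s • P + t • Q).coeff k = s * P.coeff k + t * Q.coeff k := fun k => by simp
  have hdeg : (s • P + t • Q).natDegree ≤ n := natDegree_le_iff_coeff_eq_zero.2 fun k hk => by
    rw [hcoeff, coeff_eq_zero_of_natDegree_lt (hPd ▸ hk), coeff_eq_zero_of_natDegree_lt (hQd ▸ hk)]
    ring
  have hlead : (s • P + t • Q).coeff n = 1 := by
    rw [hcoeff, ← hPd, hPm.coeff_natDegree, hPd, ← hQd, hQm.coeff_natDegree, mul_one, mul_one, hst]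
  refine ⟨monic_of_natDegree_le_of_coeff_eq_one n hdeg hlead,
    natDegree_eq_of_le_of_coeff_ne_zero hdeg (hlead ▸ one_ne_zero), fun k hk => ?_⟩
  rw [hcoeff]
  exact convex_Icc (a k) (b k) (hPc k hk) (hQc k hk) hs ht hst

theorem zero_exclusion_principle_general (n q : ℕ) (a b : ℕ → ℝ)
    (hno : ∀ P : Polynomial ℝ, memIntervalPoly n a b P →
      ∀ ω : ℝ, (P.map (algebraMap ℝ ℂ)).eval (ω * Complex.I) ≠ 0)
    (P₀ : Polynomial ℝ) (hP₀ : memIntervalPoly n a b P₀)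
    (hpos₀ : posRootCount P₀ = q) :
    ∀ P : Polynomial ℝ, memIntervalPoly n a b P →
      posRootCount P = q ∧ negRootCount P = n - q := by
  intro P hP
  let γ : unitInterval → ℝ[X] := fun t => AffineMap.lineMap P₀ P (t : ℝ)
  have hγ : ∀ t, memIntervalPoly n a b (γ t) := fun t =>
    (convex_setOf_memIntervalPoly n a b).lineMap_mem hP₀ hP t.2
  have hcont : Continuous fun t => posRootCount (γ t) :=
    continuous_rightHalfPlaneRootCount (fun t => (hγ t).1.map _)
      (fun t => ((hγ t).1.natDegree_map _).trans (hγ t).2.1)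
      (fun j => by
        simp only [γ, coeff_map, AffineMap.lineMap_apply_module, coeff_add, coeff_smul]
        fun_prop)
      (fun t => hno _ (hγ t))
  have hpos : posRootCount P = q := by
    simpa [γ, hpos₀] using PreconnectedSpace.constant inferInstance hcont (x := 1) (y := 0)
  refine ⟨hpos, ?_⟩
  have hsum := posRootCount_add_negRootCount (hno P hP)
  rw [hP.2.1] at hsum
  omega

/-- Zero Exclusion Principle for `q`-instability: if no member of the monic interval
polynomial has a purely imaginary root and one member has exactly `q` roots in the open
right half-plane and `n - q` in the open left half-plane, then so does every member. -/
theorem zero_exclusion_principle (n q : ℕ) (a b : ℕ → ℝ)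
    (hno : ∀ P : Polynomial ℝ, memIntervalPoly n a b P →
      ∀ ω : ℝ, (P.map (algebraMap ℝ ℂ)).eval (ω * Complex.I) ≠ 0)
    (P₀ : Polynomial ℝ) (hP₀ : memIntervalPoly n a b P₀)
    (hpos₀ : posRootCount P₀ = q) (hneg₀ : negRootCount P₀ = n - q) :
    ∀ P : Polynomial ℝ, memIntervalPoly n a b P →
      posRootCount P = q ∧ negRootCount P = n - q :=
  zero_exclusion_principle_general n q a b hno P₀ hP₀ hpos₀
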